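/- With notation as for Hilbert-driven Gröbner basis computations: if H_{R^i}(t₁,t₂) − H_R(t₁,t₂) = p·t₁^{β₁}t₂^{β₂} + Σ_{α ≰ β} r_α t₁^{α₁}t₂^{α₂} for some β ∈ N² and integer p > 0, then G∖G^i contains exactly p distinct elements of degree β, and G∖G^i contains no element of degree strictly less than β. -/

import Mathlib

/-!
Since `G' ⊆ G`, every word normal modulo `G` is normal modulo `G'`, and the Hilbert function of
a monomial algebra counts normal words; so the coefficient of `H_{R^i} - H_R` at `α` counts the
words of degree `α` that are normal modulo `G'` but not modulo `G`. For `g ∈ G ∖ G'` the word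
`lw g` is such a word, so vanishing below `β` rules out elements of `G ∖ G'` of degree `< β`.
The members of a reduced Gröbner basis of a homogeneous ideal are homogeneous (for deg-lex, a
proper factor of a word is smaller than it), hence each such word of degree `β` has a factor
`lw g` with `g ∈ G ∖ G'` of degree `β`, i.e. equals `lw g`. As `lw` is injective on `G`, there
are exactly `p` such `g`.
-/

namespace NC

/-- The free associative algebra on the alphabet `X`, with the words (the free
monoid on `X`) as a basis. -/
abbrev FA (k X : Type) [Field k] := MonoidAlgebra k (FreeMonoid X)

variable {k X : Type} [Field k]

/-- The monomial on a word `u` (with coefficient `1`). -/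
noncomputable def mono (k : Type) [Field k] {X : Type} (u : FreeMonoid X) : FA k X :=
  MonoidAlgebra.of k (FreeMonoid X) u

/-- `u` is a factor of `v`. -/
def IsFactor (u v : FreeMonoid X) : Prop := ∃ w₁ w₂ : FreeMonoid X, w₁ * u * w₂ = v

/-- The leading word of a polynomial (junk value `1` for the zero polynomial). -/
noncomputable def lw [LinearOrder (FreeMonoid X)] (f : FA k X) : FreeMonoid X :=
  WithBot.unbotD 1 f.coeff.support.max

/-- The set of leading words of the nonzero members of `G`. -/
def lwSet [LinearOrder (FreeMonoid X)] (G : Set (FA k X)) : Set (FreeMonoid X) :=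
  {u | ∃ f ∈ G, f ≠ 0 ∧ lw f = u}

/-- The normal words modulo `G` : words having no factor among the leading words of `G`. -/
def nw [LinearOrder (FreeMonoid X)] (G : Set (FA k X)) : Set (FreeMonoid X) :=
  {u | ∀ v ∈ lwSet G, ¬ IsFactor v u}

/-- The two-sided ideal (as a `k`-submodule) generated by a set `S`. -/
noncomputable def ideal2 (k : Type) [Field k] {X : Type} (S : Set (FA k X)) : Submodule k (FA k X) :=
  Submodule.span k {x | ∃ a s b, s ∈ S ∧ x = a * s * b}

/-- A `k`-submodule of the free algebra which is a two-sided ideal. -/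
def IsTwoSided (𝔞 : Submodule k (FA k X)) : Prop :=
  ∀ a x : FA k X, x ∈ 𝔞 → a * x ∈ 𝔞 ∧ x * a ∈ 𝔞

/-- `G` is a Gröbner basis of the (two-sided) ideal `𝔞`. -/
def IsGrobner [LinearOrder (FreeMonoid X)] (𝔞 : Submodule k (FA k X))
    (G : Set (FA k X)) : Prop :=
  (∀ g ∈ G, g ∈ 𝔞) ∧ ∀ f ∈ 𝔞, f ≠ 0 → lw f ∉ nw G

/-- `G` is reduced: every member is monic and normal modulo the remaining members. -/
def IsReducedGB [LinearOrder (FreeMonoid X)] (G : Set (FA k X)) : Prop :=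
  ∀ f ∈ G, f.coeff (lw f) = 1 ∧ ∀ u ∈ f.coeff.support, u ∈ nw (G \ {f})

/-- The fixed linear order on words is admissible. -/
def IsAdmissible (X : Type) [LinearOrder (FreeMonoid X)] : Prop :=
  WellFoundedLT (FreeMonoid X) ∧ (∀ u : FreeMonoid X, u ≠ 1 → 1 < u) ∧
    ∀ u v w₁ w₂ : FreeMonoid X, u < v → w₁ * u * w₂ < w₁ * v * w₂

end NC

namespace NC2
open NC
variable {k X : Type} [Field k]

/-- The (multi)degree of a word, for the grading determined by `e` on the letters. -/
def mdeg {σ : Type} [AddCommMonoid σ] (e : X → σ) (w : FreeMonoid X) : σ :=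
  ((FreeMonoid.toList w).map e).sum

/-- `f` is homogeneous of degree `α`. -/
def IsHomog {σ : Type} [AddCommMonoid σ] (e : X → σ) (α : σ) (f : NC.FA k X) : Prop :=
  ∀ u ∈ f.coeff.support, mdeg e u = α

open Classical in
/-- The degree-`α` homogeneous component of `f`. -/
noncomputable def homComp {σ : Type} [AddCommMonoid σ] (e : X → σ) (α : σ) (f : NC.FA k X) :
    NC.FA k X :=
  MonoidAlgebra.ofCoeff (Finsupp.filter (fun u => mdeg e u = α) f.coeff)

/-- A homogeneous (two-sided) ideal. -/
def IsHomogIdeal {σ : Type} [AddCommMonoid σ] (e : X → σ) (𝔞 : Submodule k (NC.FA k X)) : Prop :=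
  NC.IsTwoSided 𝔞 ∧ ∀ f ∈ 𝔞, ∀ α : σ, homComp e α f ∈ 𝔞

/-- Polynomials supported on a given set of words. -/
noncomputable def wsupported (k : Type) [Field k] {X : Type} (S : Set (FreeMonoid X)) :
    Submodule k (NC.FA k X) :=
  (Finsupp.supported k k S).comap (MonoidAlgebra.coeffLinearEquiv k).toLinearMap

/-- Dimension of the image, in the quotient by `𝔞`, of the span of the words in `S`. -/
noncomputable def hilbS (𝔞 : Submodule k (NC.FA k X)) (S : Set (FreeMonoid X)) : ℕ :=
  Module.finrank k ↥((wsupported k S).map 𝔞.mkQ)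

/-- The multigraded Hilbert function of the quotient algebra `k⟨X⟩/𝔞`. -/
noncomputable def hilb {σ : Type} [AddCommMonoid σ] (e : X → σ) (𝔞 : Submodule k (NC.FA k X))
    (α : σ) : ℕ :=
  hilbS 𝔞 {u | mdeg e u = α}

/-- The monomial ideal on a set of words. -/
noncomputable def monIdeal (k : Type) [Field k] {X : Type} (V : Set (FreeMonoid X)) :
    Submodule k (NC.FA k X) :=
  NC.ideal2 k ((fun u => NC.mono k u) '' V)

/-- Partial sums of a Hilbert function. -/
def psum (H : ℕ → ℕ) (n : ℕ) : ℕ := ∑ i ∈ Finset.range (n + 1), H i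

/-- The growth function is bounded by a polynomial of degree `d`. -/
def PolyBoundedBy (H : ℕ → ℕ) (d : ℕ) : Prop := ∃ C : ℕ, ∀ n, psum H n ≤ C * (n + 1) ^ d

/-- Polynomial growth (of some degree). -/
def PolyGrowth (H : ℕ → ℕ) : Prop := ∃ d, PolyBoundedBy H d

/-- Polynomial growth of degree exactly `d`. -/
def PolyGrowthDeg (H : ℕ → ℕ) (d : ℕ) : Prop :=
  ∃ C : ℕ, 0 < C ∧ ∀ n, psum H n ≤ C * (n + 1) ^ d ∧ (n + 1) ^ d ≤ C * psum H n

/-- Gelfand-Kirillov dimension of a graded algebra with Hilbert function `H`, as an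
extended natural number. -/
noncomputable def gkdimH (H : ℕ → ℕ) : ℕ∞ :=
  sInf ((fun d : ℕ => (d : ℕ∞)) '' {d | PolyBoundedBy H d})

end NC2

namespace NCdl

/-- The deg-lex order on the words over `{x₁, x₂}` (with `x₂ > x₁`): words are compared
first by total degree, then by degree in `x₂`, and finally lexicographically. -/
noncomputable instance deglex : LinearOrder (FreeMonoid (Fin 2)) :=
  LinearOrder.lift'
    (fun w => toLex ((FreeMonoid.toList w).length,
      toLex ((FreeMonoid.toList w).count (1 : Fin 2), FreeMonoid.toList w)))
    (by
      intro u v h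
      exact FreeMonoid.toList.injective (congrArg (fun p => (ofLex (ofLex p).2).2) h))

end NCdl

namespace NCx
/-- The `ℤ²`-grading (as an `ℕ²`-grading) of `k⟨x₁,x₂⟩` with
`deg x₁ = (1,0)`, `deg x₂ = (0,1)`. -/
def e2 : Fin 2 → ℕ × ℕ := fun i => if i = 0 then (1, 0) else (0, 1)

/-- `G'` is an initial segment of `G` for the enumeration of `G` by increasing leading
words, i.e. `G' = G^i` for some `i` (or `G' = G`). -/
def IsInitSeg {k X : Type} [Field k] [LinearOrder (FreeMonoid X)]
    (G G' : Set (NC.FA k X)) : Prop :=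
  G' ⊆ G ∧ ∀ g ∈ G', ∀ h ∈ G, NC.lw h < NC.lw g → h ∈ G'
end NCx

namespace NC

theorem isFactor_refl {X : Type} (u : FreeMonoid X) : IsFactor u u :=
  ⟨1, 1, by rw [one_mul, mul_one]⟩

variable {k X : Type} [Field k] [LinearOrder (FreeMonoid X)]

theorem lw_eq_max' {f : FA k X} (h : f.coeff.support.Nonempty) :
    lw f = f.coeff.support.max' h := by
  rw [lw, ← Finset.coe_max' h, WithBot.unbotD_coe]

theorem lw_mem_support {f : FA k X} (hf : f ≠ 0) : lw f ∈ f.coeff.support := by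
  have h : f.coeff.support.Nonempty := by simpa using hf
  rw [lw_eq_max' h]
  exact Finset.max'_mem _ h

theorem le_lw {f : FA k X} {u : FreeMonoid X} (hu : u ∈ f.coeff.support) : u ≤ lw f := by
  rw [lw_eq_max' ⟨u, hu⟩]
  exact Finset.le_max' _ _ hu

theorem nw_antitone : Antitone (nw : Set (FA k X) → Set (FreeMonoid X)) := by
  intro G₁ G₂ h u hu v hv
  obtain ⟨f, hf, hf0, rfl⟩ := hv
  exact hu (lw f) ⟨f, h hf, hf0, rfl⟩

theorem notMem_nw_iff {G : Set (FA k X)} {u : FreeMonoid X} :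
    u ∉ nw G ↔ ∃ g ∈ G, g ≠ 0 ∧ IsFactor (lw g) u := by
  simp [nw, lwSet]

namespace IsReducedGB

variable {G : Set (FA k X)} {g : FA k X}

theorem ne_zero (hred : IsReducedGB G) (hg : g ∈ G) : g ≠ 0 := by
  rintro rfl
  simpa using (hred 0 hg).1

theorem lw_mem_nw_diff (hred : IsReducedGB G) (hg : g ∈ G) : lw g ∈ nw (G \ {g}) :=
  (hred g hg).2 _ (lw_mem_support (hred.ne_zero hg))

theorem lw_notMem_nw (hred : IsReducedGB G) (hg : g ∈ G) : lw g ∉ nw G :=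
  notMem_nw_iff.2 ⟨g, hg, hred.ne_zero hg, isFactor_refl _⟩

theorem lw_mem_nw_of_notMem {G' : Set (FA k X)} (hred : IsReducedGB G) (hG' : G' ⊆ G)
    (hg : g ∈ G) (hg' : g ∉ G') : lw g ∈ nw G' := by
  have hsub : G' ⊆ G \ {g} := fun f hf => ⟨hG' hf, fun h => hg' (Set.mem_singleton_iff.1 h ▸ hf)⟩
  exact nw_antitone hsub (hred.lw_mem_nw_diff hg)

theorem injOn_lw (hred : IsReducedGB G) : Set.InjOn lw G := by
  intro g hg g' hg' hlw
  by_contra hne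
  exact hred.lw_mem_nw_diff hg (lw g') ⟨g', ⟨hg', Ne.symm hne⟩, hred.ne_zero hg', rfl⟩
    (hlw ▸ isFactor_refl _)

end IsReducedGB

end NC

namespace NC2
open NC

variable {k X σ : Type} [Field k] [AddCommMonoid σ] {e : X → σ}

theorem mdeg_mul (u v : FreeMonoid X) : mdeg e (u * v) = mdeg e u + mdeg e v := by
  simp only [mdeg, FreeMonoid.toList_mul, List.map_append, List.sum_append]

open Classical in
theorem coeff_homComp (α : σ) (f : FA k X) (u : FreeMonoid X) :
    (homComp e α f).coeff u = if mdeg e u = α then f.coeff u else 0 := by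
  simp [homComp, Finsupp.filter_apply]

theorem mdeg_le_of_isFactor [PartialOrder σ] [CanonicallyOrderedAdd σ] {u v : FreeMonoid X}
    (h : IsFactor u v) : mdeg e u ≤ mdeg e v := by
  obtain ⟨a, b, rfl⟩ := h
  rw [mdeg_mul, mdeg_mul]
  exact le_add_right le_add_self

theorem eq_one_of_mdeg_eq_zero [PartialOrder σ] [CanonicallyOrderedAdd σ] [IsOrderedAddMonoid σ]
    (he : ∀ x, e x ≠ 0) {u : FreeMonoid X} (h : mdeg e u = 0) : u = 1 := by
  rw [mdeg, List.sum_eq_zero_iff] at h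
  rw [← FreeMonoid.length_eq_zero, FreeMonoid.length, List.length_eq_zero_iff,
    List.eq_nil_iff_forall_not_mem]
  exact fun x hx => he x (h _ (List.mem_map_of_mem hx))

theorem eq_of_isFactor_of_mdeg_eq [PartialOrder σ] [CanonicallyOrderedAdd σ] [IsOrderedAddMonoid σ]
    [IsLeftCancelAdd σ] (he : ∀ x, e x ≠ 0) {u v : FreeMonoid X} (h : IsFactor u v)
    (hdeg : mdeg e u = mdeg e v) : u = v := by
  obtain ⟨a, b, rfl⟩ := h
  rw [mdeg_mul, mdeg_mul, add_right_comm, add_comm, ← add_assoc, eq_comm] at hdeg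
  rw [add_assoc, add_eq_left, add_eq_zero] at hdeg
  rw [eq_one_of_mdeg_eq_zero he hdeg.1, eq_one_of_mdeg_eq_zero he hdeg.2, one_mul, mul_one]

def wordsAvoiding (V : Set (FreeMonoid X)) : Set (FreeMonoid X) :=
  {u | ∀ v ∈ V, ¬ IsFactor v u}

theorem single_mem_monIdeal {V : Set (FreeMonoid X)} {v u : FreeMonoid X} (hv : v ∈ V)
    (h : IsFactor v u) : MonoidAlgebra.single u (1 : k) ∈ monIdeal k V := by
  obtain ⟨a, b, rfl⟩ := h
  refine Submodule.subset_span ⟨mono k a, mono k v, mono k b, ⟨v, hv, rfl⟩, ?_⟩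
  simp only [mono, MonoidAlgebra.of_apply, MonoidAlgebra.single_mul_single, mul_one]

theorem monIdeal_le_supported (V : Set (FreeMonoid X)) :
    monIdeal k V ≤ MonoidAlgebra.supported k k (wordsAvoiding V)ᶜ := by
  classical
  refine Submodule.span_le.2 ?_
  rintro _ ⟨a, _, b, ⟨v, hv, rfl⟩, rfl⟩ w hw hwA
  obtain ⟨y, hy, z, -, rfl⟩ := Finset.mem_mul.1 (MonoidAlgebra.support_coeff_mul_subset _ _ hw)
  obtain ⟨x, -, v', hv', rfl⟩ := Finset.mem_mul.1 (MonoidAlgebra.support_coeff_mul_subset _ _ hy)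
  obtain rfl : v' = v := by simpa [mono] using hv'
  exact hwA v' hv ⟨x, z, rfl⟩

theorem finrank_supported {T : Set (FreeMonoid X)} (hT : T.Finite) :
    Module.finrank k (MonoidAlgebra.supported k k T) = T.ncard := by
  have := hT.fintype
  rw [(MonoidAlgebra.supportedEquivFinsupp T).finrank_eq, Module.finrank_finsupp_self,
    ← Nat.card_eq_fintype_card, Nat.card_coe_set_eq]

theorem hilbS_monIdeal (V : Set (FreeMonoid X)) {S : Set (FreeMonoid X)} (hS : S.Finite) :
    hilbS (monIdeal k V) S = (S ∩ wordsAvoiding V).ncard := by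
  set A := wordsAvoiding V
  have hsplit : wsupported k S =
      MonoidAlgebra.supported k k (S ∩ A) ⊔ MonoidAlgebra.supported k k (S \ A) := by
    simp only [wsupported, ← MonoidAlgebra.supported.eq_1, MonoidAlgebra.supported_eq_span_single,
      ← Submodule.span_union, ← Set.image_union, Set.inter_union_sdiff]
  have hkill : (MonoidAlgebra.supported k k (S \ A)).map (monIdeal k V).mkQ = ⊥ := by
    rw [← LinearMap.le_ker_iff_map, Submodule.ker_mkQ, MonoidAlgebra.supported_eq_span_single,
      Submodule.span_le]
    rintro _ ⟨u, ⟨-, hu⟩, rfl⟩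
    obtain ⟨v, hv, hvu⟩ : ∃ v ∈ V, IsFactor v u := by simpa [A, wordsAvoiding] using hu
    exact single_mem_monIdeal hv hvu
  have hdisj : Disjoint (MonoidAlgebra.supported k k (S ∩ A)) (monIdeal k V) := by
    refine Submodule.disjoint_def.2 fun x hA hV => ?_
    have hsupp := Set.subset_inter (MonoidAlgebra.mem_supported.1 hA)
      (MonoidAlgebra.mem_supported.1 (monIdeal_le_supported V hV))
    rw [Set.inter_assoc, Set.inter_compl_self, Set.inter_empty, Set.subset_empty_iff,
      Finset.coe_eq_empty, Finsupp.support_eq_empty, MonoidAlgebra.coeff_eq_zero] at hsupp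
    exact hsupp
  rw [hilbS, hsplit, Submodule.map_sup, hkill, sup_bot_eq,
    ← LinearMap.range_domRestrict, LinearMap.finrank_range_of_inj
      (by rwa [LinearMap.injective_domRestrict_iff, Submodule.ker_mkQ]),
    finrank_supported (hS.subset Set.inter_subset_left)]

section LeadingWords

variable [LinearOrder (FreeMonoid X)]

theorem wordsAvoiding_lwSet (G : Set (FA k X)) : wordsAvoiding (lwSet G) = nw G := rfl

theorem hilb_monIdeal_lwSet_eq_add {G G' : Set (FA k X)} (hG' : G' ⊆ G) {α : σ}
    (hfin : {u | mdeg e u = α}.Finite) :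
    hilb e (monIdeal k (lwSet G')) α =
      hilb e (monIdeal k (lwSet G)) α + ({u | mdeg e u = α} ∩ (nw G' \ nw G)).ncard := by
  rw [hilb, hilb, hilbS_monIdeal _ hfin, hilbS_monIdeal _ hfin, wordsAvoiding_lwSet,
    wordsAvoiding_lwSet, ← Set.inter_sdiff_assoc,
    ← Set.ncard_inter_add_ncard_sdiff_eq_ncard _ (nw G) (hfin.subset Set.inter_subset_left),
    Set.inter_assoc, Set.inter_eq_right.2 (nw_antitone hG')]

theorem mdeg_lw_of_isHomog {α : σ} {f : FA k X} (hf0 : f ≠ 0) (hf : IsHomog e α f) :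
    mdeg e (lw f) = α :=
  hf _ (lw_mem_support hf0)

theorem _root_.NC.IsReducedGB.isHomog_mdeg_lw
    (hord : ∀ ⦃u v : FreeMonoid X⦄, IsFactor u v → u ≠ v → u < v)
    {𝔞 : Submodule k (FA k X)} (hh : IsHomogIdeal e 𝔞) {G : Set (FA k X)} (hGB : IsGrobner 𝔞 G)
    (hred : IsReducedGB G) {g : FA k X} (hg : g ∈ G) : IsHomog e (mdeg e (lw g)) g := by
  classical
  set γ := mdeg e (lw g)
  set f := g - homComp e γ g
  have hf𝔞 : f ∈ 𝔞 := 𝔞.sub_mem (hGB.1 g hg) (hh.2 g (hGB.1 g hg) γ)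
  have hcoeff (u : FreeMonoid X) : f.coeff u = if mdeg e u = γ then 0 else g.coeff u := by
    rw [MonoidAlgebra.coeff_sub, Finsupp.sub_apply, coeff_homComp]
    split_ifs <;> simp
  suffices hf0 : f = 0 by
    intro u hu
    by_contra hne
    exact Finsupp.mem_support_iff.1 hu (by simpa [hf0, hne, eq_comm] using hcoeff u)
  -- The leading word of `f` lies in the support of `g`, away from degree `γ`; being reducible
  -- only by `lw g`, it would be a proper multiple of `lw g`, hence bigger than `lw g`.
  by_contra hf0
  have hlwf := Finsupp.mem_support_iff.1 (lw_mem_support hf0)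
  rw [hcoeff] at hlwf
  have hdeg : mdeg e (lw f) ≠ γ := fun h => hlwf (if_pos h)
  have hsupp : lw f ∈ g.coeff.support := Finsupp.mem_support_iff.2 (by rwa [if_neg hdeg] at hlwf)
  obtain ⟨g', hg', hg'0, hfac⟩ := notMem_nw_iff.1 (hGB.2 f hf𝔞 hf0)
  obtain rfl : g' = g := by
    by_contra hne
    exact (hred g hg).2 _ hsupp (lw g') ⟨g', ⟨hg', hne⟩, hg'0, rfl⟩ hfac
  exact (le_lw hsupp).not_gt (hord hfac fun h => hdeg (h ▸ rfl))

theorem image_lw_eq [PartialOrder σ] [CanonicallyOrderedAdd σ] [IsOrderedAddMonoid σ]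
    [IsLeftCancelAdd σ] (he : ∀ x, e x ≠ 0) {G G' : Set (FA k X)} (hred : IsReducedGB G)
    (hG' : G' ⊆ G) (hhom : ∀ g ∈ G, IsHomog e (mdeg e (lw g)) g) {β : σ}
    (hmin : ∀ g ∈ G, g ∉ G' → ¬ mdeg e (lw g) < β) :
    lw '' {g | g ∈ G ∧ g ∉ G' ∧ g ≠ 0 ∧ IsHomog e β g} = {u | mdeg e u = β} ∩ (nw G' \ nw G) := by
  ext u
  constructor
  · rintro ⟨g, ⟨hg, hg', hg0, hβ⟩, rfl⟩
    exact ⟨mdeg_lw_of_isHomog hg0 hβ, hred.lw_mem_nw_of_notMem hG' hg hg', hred.lw_notMem_nw hg⟩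
  · rintro ⟨hu : mdeg e u = β, hu', hnw⟩
    obtain ⟨g, hg, hg0, hfac⟩ := notMem_nw_iff.1 hnw
    have hg' : g ∉ G' := fun h => hu' (lw g) ⟨g, h, hg0, rfl⟩ hfac
    have hdeg : mdeg e (lw g) = β :=
      ((mdeg_le_of_isFactor hfac).trans_eq hu).eq_of_not_lt (hmin g hg hg')
    exact ⟨g, ⟨hg, hg', hg0, hdeg ▸ hhom g hg⟩,
      eq_of_isFactor_of_mdeg_eq he hfac (hdeg.trans hu.symm)⟩

end LeadingWords

end NC2

namespace NCdl

theorem lt_of_isFactor_of_ne {u v : FreeMonoid (Fin 2)} (h : NC.IsFactor u v) (hne : u ≠ v) :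
    u < v := by
  obtain ⟨a, b, rfl⟩ := h
  have hlen : u.length < (a * u * b).length := by
    rw [FreeMonoid.length_mul, FreeMonoid.length_mul]
    by_contra! hle
    rw [FreeMonoid.length_eq_zero.1 (by omega : a.length = 0),
      FreeMonoid.length_eq_zero.1 (by omega : b.length = 0), one_mul, mul_one] at hne
    exact hne rfl
  exact Prod.Lex.lt_iff.2 (Or.inl hlen)

end NCdl

namespace NCx
open NC2

theorem e2_ne_zero (i : Fin 2) : e2 i ≠ 0 := by
  fin_cases i <;> simp [e2]

theorem mdeg_e2_fst_add_snd (u : FreeMonoid (Fin 2)) :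
    (mdeg e2 u).1 + (mdeg e2 u).2 = u.length := by
  induction u using FreeMonoid.inductionOn' with
  | one => rfl
  | of_mul x u ih =>
    rw [mdeg_mul, FreeMonoid.length_mul, FreeMonoid.length_of, ← ih]
    fin_cases x <;> simp [mdeg, e2] <;> omega

theorem finite_setOf_mdeg_e2_eq (α : ℕ × ℕ) : {u : FreeMonoid (Fin 2) | mdeg e2 u = α}.Finite := by
  refine ((List.finite_length_eq (Fin 2) (α.1 + α.2)).preimage
    FreeMonoid.toList.injective.injOn).subset fun u (hu : mdeg e2 u = α) => ?_
  rw [Set.mem_preimage, Set.mem_ofPred_eq, ← hu, mdeg_e2_fst_add_snd, FreeMonoid.length]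

end NCx

open NC NC2 NCx

theorem stmt_4_general (k : Type) [Field k]
    (𝔞 : Submodule k (NC.FA k (Fin 2))) (hh : NC2.IsHomogIdeal NCx.e2 𝔞)
    (G : Set (NC.FA k (Fin 2))) (hGB : NC.IsGrobner 𝔞 G) (hred : NC.IsReducedGB G)
    (G' : Set (NC.FA k (Fin 2))) (hseg : NCx.IsInitSeg G G')
    (β : ℕ × ℕ) (p : ℕ)
    (hcoef : NC2.hilb NCx.e2 (NC2.monIdeal k (NC.lwSet G')) β =
      NC2.hilb NCx.e2 (NC2.monIdeal k (NC.lwSet G)) β + p)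
    (hlow : ∀ α : ℕ × ℕ, α < β →
      NC2.hilb NCx.e2 (NC2.monIdeal k (NC.lwSet G')) α =
        NC2.hilb NCx.e2 (NC2.monIdeal k (NC.lwSet G)) α) :
    Set.ncard {g | g ∈ G ∧ g ∉ G' ∧ g ≠ 0 ∧ NC2.IsHomog NCx.e2 β g} = p ∧
    ∀ g ∈ G, g ∉ G' → ∀ α : ℕ × ℕ, α < β → ¬ (g ≠ 0 ∧ NC2.IsHomog NCx.e2 α g) := by
  have hdiff (α : ℕ × ℕ) := hilb_monIdeal_lwSet_eq_add (k := k) hseg.1 (finite_setOf_mdeg_e2_eq α)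
  have hmin : ∀ g ∈ G, g ∉ G' → ¬ mdeg e2 (lw g) < β := by
    intro g hg hg' hlt
    have hnew : lw g ∈ {u | mdeg e2 u = mdeg e2 (lw g)} ∩ (nw G' \ nw G) :=
      ⟨rfl, hred.lw_mem_nw_of_notMem hseg.1 hg hg', hred.lw_notMem_nw hg⟩
    have hpos := (Set.ncard_pos ((finite_setOf_mdeg_e2_eq _).subset Set.inter_subset_left)).2
      ⟨_, hnew⟩
    have := hdiff (mdeg e2 (lw g))
    rw [hlow _ hlt] at this
    omega
  refine ⟨?_, fun g hg hg' α hα ⟨hg0, hhom⟩ => hmin g hg hg' (mdeg_lw_of_isHomog hg0 hhom ▸ hα)⟩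
  have hhomG (g) (hg : g ∈ G) :=
    hred.isHomog_mdeg_lw (fun _ _ => NCdl.lt_of_isFactor_of_ne) hh hGB hg
  rw [← (hred.injOn_lw.mono fun g hg => hg.1).ncard_image,
    image_lw_eq e2_ne_zero hred hseg.1 hhomG hmin]
  have := hdiff β
  omega

/-- Hilbert-driven computation: if the difference of the two-variable
Hilbert series of `R^i = k⟨x₁,x₂⟩/(lw(G^i))` and `R = k⟨x₁,x₂⟩/(lw(G))` has
coefficient `p > 0` at `β`, vanishing coefficients at all `α < β`, then `G ∖ G^i`
contains exactly `p` elements of degree `β` and none of degree `< β`.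
(Initial segments `G'` of `G` for the order by leading words are exactly the `G^i`.) -/
theorem stmt_4 (k : Type) [Field k]
    (𝔞 : Submodule k (NC.FA k (Fin 2))) (hh : NC2.IsHomogIdeal NCx.e2 𝔞)
    (G : Set (NC.FA k (Fin 2))) (hGB : NC.IsGrobner 𝔞 G) (hred : NC.IsReducedGB G)
    (G' : Set (NC.FA k (Fin 2))) (hseg : NCx.IsInitSeg G G')
    (β : ℕ × ℕ) (p : ℕ) (hp : 0 < p)
    (hcoef : NC2.hilb NCx.e2 (NC2.monIdeal k (NC.lwSet G')) β =
      NC2.hilb NCx.e2 (NC2.monIdeal k (NC.lwSet G)) β + p)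
    (hlow : ∀ α : ℕ × ℕ, α < β →
      NC2.hilb NCx.e2 (NC2.monIdeal k (NC.lwSet G')) α =
        NC2.hilb NCx.e2 (NC2.monIdeal k (NC.lwSet G)) α) :
    Set.ncard {g | g ∈ G ∧ g ∉ G' ∧ g ≠ 0 ∧ NC2.IsHomog NCx.e2 β g} = p ∧
    ∀ g ∈ G, g ∉ G' → ∀ α : ℕ × ℕ, α < β → ¬ (g ≠ 0 ∧ NC2.IsHomog NCx.e2 α g) :=
  stmt_4_general k 𝔞 hh G hGB hred G' hseg β p hcoef hlow
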